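/- Let Φ be a Young function and φ ∈ G^dec (φ almost decreasing, φ(r)rⁿ almost increasing). Then there exists C ≥ 1 such that for every ball B = B(a,r) ⊂ ℝⁿ: 1/Φ⁻¹(φ(r)) ≤ ‖χ_B‖_{wL^{(Φ,φ)}} ≤ ‖χ_B‖_{L^{(Φ,φ)}} ≤ C/Φ⁻¹(φ(r)). -/

import Mathlib

open MeasureTheory ENNReal NNReal Metric Set Filter Topology

noncomputable def geninv (Φ : ℝ≥0∞ → ℝ≥0∞) (u : ℝ≥0∞) : ℝ≥0∞ :=
  sInf {t : ℝ≥0∞ | u < Φ t}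

/-- Generalized Young function (class Φ_Y of the paper): increasing, vanishing at 0,
infinite at ∞, convex, left continuous, nondegenerate. -/
def IsYoung (Φ : ℝ≥0∞ → ℝ≥0∞) : Prop :=
  Monotone Φ ∧ Φ 0 = 0 ∧ Φ ⊤ = ⊤ ∧
    (∀ x y a b : ℝ≥0∞, a + b = 1 → Φ (a * x + b * y) ≤ a * Φ x + b * Φ y) ∧
    (∀ t : ℝ≥0∞, 0 < t → ContinuousWithinAt Φ (Set.Iio t) t) ∧
    (∃ t : ℝ≥0∞, 0 < t ∧ Φ t < ⊤) ∧ (∃ t : ℝ≥0∞, t ≠ ⊤ ∧ 0 < Φ t)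

/-- The class `G^dec`: positive, almost decreasing, and `r ↦ φ(r) rⁿ` almost increasing. -/
def Gdec (n : ℕ) (φ : ℝ → ℝ≥0∞) : Prop :=
  (∀ r : ℝ, 0 < r → 0 < φ r ∧ φ r < ⊤) ∧
    ∃ C : ℝ≥0∞, 0 < C ∧ C ≠ ⊤ ∧ ∀ r s : ℝ, 0 < r → r < s →
      φ s ≤ C * φ r ∧ φ r * ENNReal.ofReal r ^ n ≤ C * (φ s * ENNReal.ofReal s ^ n)

/-- Orlicz–Morrey functional on a single ball `B(a,r)`. -/
noncomputable def ballNorm (Φ : ℝ≥0∞ → ℝ≥0∞) (φ : ℝ → ℝ≥0∞) {d : ℕ}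
    (a : EuclideanSpace ℝ (Fin d)) (r : ℝ) (f : EuclideanSpace ℝ (Fin d) → ℝ≥0∞) : ℝ≥0∞ :=
  sInf {l : ℝ≥0∞ | 0 < l ∧
    (∫⁻ x in ball a r, Φ (f x / l)) ≤ φ r * volume (ball a r)}

/-- Weak Orlicz–Morrey functional on a single ball `B(a,r)`. -/
noncomputable def wBallNorm (Φ : ℝ≥0∞ → ℝ≥0∞) (φ : ℝ → ℝ≥0∞) {d : ℕ}
    (a : EuclideanSpace ℝ (Fin d)) (r : ℝ) (f : EuclideanSpace ℝ (Fin d) → ℝ≥0∞) : ℝ≥0∞ :=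
  sInf {l : ℝ≥0∞ | 0 < l ∧ ∀ t : ℝ≥0∞, 0 < t → t ≠ ⊤ →
    Φ t * volume {x ∈ ball a r | t < f x / l} ≤ φ r * volume (ball a r)}

/-- Orlicz–Morrey norm. -/
noncomputable def omNorm (Φ : ℝ≥0∞ → ℝ≥0∞) (φ : ℝ → ℝ≥0∞) {d : ℕ}
    (f : EuclideanSpace ℝ (Fin d) → ℝ≥0∞) : ℝ≥0∞ :=
  ⨆ (a : EuclideanSpace ℝ (Fin d)) (r : ℝ) (_ : 0 < r), ballNorm Φ φ a r f

/-- Weak Orlicz–Morrey norm. -/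
noncomputable def womNorm (Φ : ℝ≥0∞ → ℝ≥0∞) (φ : ℝ → ℝ≥0∞) {d : ℕ}
    (f : EuclideanSpace ℝ (Fin d) → ℝ≥0∞) : ℝ≥0∞ :=
  ⨆ (a : EuclideanSpace ℝ (Fin d)) (r : ℝ) (_ : 0 < r), wBallNorm Φ φ a r f

/-!
The lower bound tests the weak condition on the ball `B(a,r)` itself at levels `t` just above
`Φ⁻¹(φ r)`, where `φ r < Φ t`; weak ≤ strong is Chebyshev's inequality. For the upper bound take
`λ = C / Φ⁻¹(φ r)`: by left continuity `Φ (Φ⁻¹(φ r)) ≤ φ r`, so convexity gives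
`Φ (1/λ) ≤ φ r / C`, and on any other ball `B(a',r')` the two `G^dec` conditions give
`φ r |B(a,r) ∩ B(a',r')| ≤ C φ r' |B(a',r')|`.
-/

section Geninv

variable {Φ : ℝ≥0∞ → ℝ≥0∞} {u : ℝ≥0∞}

lemma apply_le_of_lt_geninv {s : ℝ≥0∞} (hs : s < geninv Φ u) : Φ s ≤ u :=
  not_lt.mp fun h => (sInf_le (s := {t | u < Φ t}) h).not_gt hs

lemma apply_geninv_le (hlc : ∀ t : ℝ≥0∞, 0 < t → ContinuousWithinAt Φ (Iio t) t)
    (hg : 0 < geninv Φ u) : Φ (geninv Φ u) ≤ u :=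
  have : (𝓝[<] geninv Φ u).NeBot := nhdsLT_neBot_of_exists_lt ⟨0, hg⟩
  le_of_tendsto (hlc _ hg) (eventually_nhdsWithin_of_forall fun _ hs => apply_le_of_lt_geninv hs)

lemma geninv_ne_top (hlc : ∀ t : ℝ≥0∞, 0 < t → ContinuousWithinAt Φ (Iio t) t)
    (htop : Φ ⊤ = ⊤) (hu : u ≠ ⊤) : geninv Φ u ≠ ⊤ := by
  intro hg
  have := apply_geninv_le hlc (hg ▸ WithTop.top_pos)
  rw [hg, htop, top_le_iff] at this
  exact hu this

end Geninv

lemma apply_mul_le_mul_apply {Φ : ℝ≥0∞ → ℝ≥0∞}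
    (hconv : ∀ x y a b : ℝ≥0∞, a + b = 1 → Φ (a * x + b * y) ≤ a * Φ x + b * Φ y)
    (h0 : Φ 0 = 0) {c : ℝ≥0∞} (hc : c ≤ 1) (t : ℝ≥0∞) : Φ (c * t) ≤ c * Φ t := by
  simpa [h0] using hconv t 0 c (1 - c) (add_tsub_cancel_of_le hc)

lemma lintegral_comp_indicator_div {α : Type*} [MeasurableSpace α] (μ : Measure α)
    {Φ : ℝ≥0∞ → ℝ≥0∞} (h0 : Φ 0 = 0) {s : Set α} (hs : MeasurableSet s) (l : ℝ≥0∞) :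
    ∫⁻ x, Φ (s.indicator (fun _ => (1 : ℝ≥0∞)) x / l) ∂μ = Φ (1 / l) * μ s := by
  have : (fun x => Φ (s.indicator (fun _ => (1 : ℝ≥0∞)) x / l)) =
      s.indicator fun _ => Φ (1 / l) := by
    ext x
    by_cases hx : x ∈ s <;> simp [hx, h0]
  rw [this, lintegral_indicator_const hs]

section Euclidean

variable {d : ℕ} {Φ : ℝ≥0∞ → ℝ≥0∞} {φ : ℝ → ℝ≥0∞}

lemma volume_ball_euclidean (a : EuclideanSpace ℝ (Fin d)) {r : ℝ} (hr : 0 < r) :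
    volume (ball a r) = ENNReal.ofReal r ^ d * volume (ball (0 : EuclideanSpace ℝ (Fin d)) 1) := by
  rw [Measure.addHaar_ball_of_pos _ _ hr, finrank_euclideanSpace_fin, ENNReal.ofReal_pow hr.le]

lemma Gdec.exists_mul_volume_inter_ball_le (hφ : Gdec d φ) :
    ∃ C : ℝ≥0∞, 1 ≤ C ∧ C ≠ ⊤ ∧ ∀ (a a' : EuclideanSpace ℝ (Fin d)) (r r' : ℝ), 0 < r → 0 < r' →
      φ r * volume (ball a r ∩ ball a' r') ≤ C * (φ r' * volume (ball a' r')) := by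
  obtain ⟨-, C₀, -, hC₀top, hC₀⟩ := hφ
  refine ⟨C₀ ⊔ 1, le_max_right _ _, (max_lt hC₀top.lt_top one_lt_top).ne,
    fun a a' r r' hr hr' => ?_⟩
  have hC₀le : C₀ ≤ C₀ ⊔ 1 := le_max_left _ _
  rcases lt_trichotomy r r' with hlt | rfl | hgt
  · calc φ r * volume (ball a r ∩ ball a' r')
        ≤ φ r * volume (ball a r) := by gcongr; exact inter_subset_left
      _ = φ r * ENNReal.ofReal r ^ d * volume (ball (0 : EuclideanSpace ℝ (Fin d)) 1) := by
          rw [volume_ball_euclidean a hr, mul_assoc]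
      _ ≤ C₀ * (φ r' * ENNReal.ofReal r' ^ d) * volume (ball (0 : EuclideanSpace ℝ (Fin d)) 1) :=
          mul_le_mul_left (hC₀ r r' hr hlt).2 _
      _ = C₀ * (φ r' * volume (ball a' r')) := by
          rw [volume_ball_euclidean a' hr', mul_assoc, mul_assoc]
      _ ≤ (C₀ ⊔ 1) * (φ r' * volume (ball a' r')) := by gcongr
  · calc φ r * volume (ball a r ∩ ball a' r)
        ≤ φ r * volume (ball a' r) := by gcongr; exact inter_subset_right
      _ ≤ (C₀ ⊔ 1) * (φ r * volume (ball a' r)) := le_mul_of_one_le_left zero_le (le_max_right _ _)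
  · calc φ r * volume (ball a r ∩ ball a' r')
        ≤ φ r * volume (ball a' r') := by gcongr; exact inter_subset_right
      _ ≤ C₀ * φ r' * volume (ball a' r') := by gcongr; exact (hC₀ r' r hr' hgt).1
      _ ≤ (C₀ ⊔ 1) * (φ r' * volume (ball a' r')) := by rw [mul_assoc]; gcongr

lemma wBallNorm_le_ballNorm (hmono : Monotone Φ) (a : EuclideanSpace ℝ (Fin d)) (r : ℝ)
    {f : EuclideanSpace ℝ (Fin d) → ℝ≥0∞} (hf : Measurable f) :
    wBallNorm Φ φ a r f ≤ ballNorm Φ φ a r f := by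
  refine sInf_le_sInf fun l ⟨hl, hint⟩ => ⟨hl, fun t _ _ => le_trans ?_ hint⟩
  have hsub : {x ∈ ball a r | t < f x / l} ⊆ {x | Φ t ≤ Φ (f x / l)} ∩ ball a r :=
    fun x hx => ⟨hmono hx.2.le, hx.1⟩
  calc Φ t * volume {x ∈ ball a r | t < f x / l}
      ≤ Φ t * volume.restrict (ball a r) {x | Φ t ≤ Φ (f x / l)} := by
        exact mul_le_mul_right ((measure_mono hsub).trans (Measure.le_restrict_apply _ _)) _
    _ ≤ ∫⁻ x in ball a r, Φ (f x / l) :=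
        mul_meas_ge_le_lintegral₀ (hmono.measurable.comp (hf.div_const l)).aemeasurable _

lemma inv_geninv_le_wBallNorm_indicator_ball (h0 : Φ 0 = 0) (a : EuclideanSpace ℝ (Fin d))
    {r : ℝ} (hr : 0 < r) :
    (geninv Φ (φ r))⁻¹ ≤ wBallNorm Φ φ a r ((ball a r).indicator fun _ => (1 : ℝ≥0∞)) := by
  refine le_sInf fun l ⟨_, hweak⟩ => not_lt.mp fun hl => ?_
  obtain ⟨t, hΦt, htl⟩ := sInf_lt_iff.mp (ENNReal.lt_inv_iff_lt_inv.mp hl)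
  have ht0 : 0 < t := pos_iff_ne_zero.mpr fun ht => by simp [ht, h0] at hΦt
  have hball : {x ∈ ball a r | t < (ball a r).indicator (fun _ => (1 : ℝ≥0∞)) x / l} = ball a r :=
    sep_eq_self_iff_mem_true.mpr fun x hx => by simpa [hx, one_div] using htl
  have := hweak t ht0 htl.ne_top
  rw [hball, ENNReal.mul_le_mul_iff_left (measure_ball_pos volume a hr).ne'
    measure_ball_lt_top.ne] at this
  exact this.not_gt hΦt

lemma ballNorm_indicator_ball_le_div_geninv (hΦ : IsYoung Φ) {C : ℝ≥0∞} (hC1 : 1 ≤ C)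
    (hC : C ≠ ⊤) {a a' : EuclideanSpace ℝ (Fin d)} {r r' : ℝ} (hφr : φ r ≠ ⊤)
    (hvol : φ r * volume (ball a r ∩ ball a' r') ≤ C * (φ r' * volume (ball a' r'))) :
    ballNorm Φ φ a' r' ((ball a r).indicator fun _ => (1 : ℝ≥0∞)) ≤ C / geninv Φ (φ r) := by
  obtain ⟨-, h0, htop, hconv, hlc, -, -⟩ := hΦ
  set g := geninv Φ (φ r)
  have hC0 : C ≠ 0 := (one_pos.trans_le hC1).ne'
  rcases eq_zero_or_pos g with hg | hg
  · simp [hg, ENNReal.div_zero hC0]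
  have hgtop : g ≠ ⊤ := geninv_ne_top hlc htop hφr
  refine sInf_le ⟨ENNReal.div_pos hC0 hgtop, ?_⟩
  rw [lintegral_comp_indicator_div _ h0 measurableSet_ball,
    Measure.restrict_apply measurableSet_ball, one_div, ENNReal.inv_div (.inl hgtop) (.inl hg.ne'),
    ENNReal.div_eq_inv_mul]
  calc Φ (C⁻¹ * g) * volume (ball a r ∩ ball a' r')
      ≤ C⁻¹ * φ r * volume (ball a r ∩ ball a' r') := by
        gcongr
        exact (apply_mul_le_mul_apply hconv h0 (ENNReal.inv_le_one.mpr hC1) g).trans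
          (by gcongr; exact apply_geninv_le hlc hg)
    _ ≤ C⁻¹ * (C * (φ r' * volume (ball a' r'))) := by rw [mul_assoc]; gcongr
    _ = φ r' * volume (ball a' r') := by rw [← mul_assoc, ENNReal.inv_mul_cancel hC0 hC, one_mul]

end Euclidean

/-- Two-sided estimates for the (weak) Orlicz–Morrey norms of characteristic
functions of balls. -/
theorem stmt12 {d : ℕ} (Φ : ℝ≥0∞ → ℝ≥0∞) (hΦ : IsYoung Φ)
    (φ : ℝ → ℝ≥0∞) (hφ : Gdec d φ) :
    ∃ C : ℝ≥0∞, 1 ≤ C ∧ C ≠ ⊤ ∧ ∀ (a : EuclideanSpace ℝ (Fin d)) (r : ℝ), 0 < r →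
      (geninv Φ (φ r))⁻¹ ≤ womNorm Φ φ ((ball a r).indicator fun _ => (1 : ℝ≥0∞)) ∧
      womNorm Φ φ ((ball a r).indicator fun _ => (1 : ℝ≥0∞)) ≤
        omNorm Φ φ ((ball a r).indicator fun _ => (1 : ℝ≥0∞)) ∧
      omNorm Φ φ ((ball a r).indicator fun _ => (1 : ℝ≥0∞)) ≤
        C / geninv Φ (φ r) := by
  obtain ⟨C, hC1, hC, hvol⟩ := hφ.exists_mul_volume_inter_ball_le
  refine ⟨C, hC1, hC, fun a r hr => ⟨?_, ?_, ?_⟩⟩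
  · exact (inv_geninv_le_wBallNorm_indicator_ball hΦ.2.1 a hr).trans
      (le_iSup_of_le a (le_iSup_of_le r (le_iSup_of_le hr le_rfl)))
  · exact iSup_mono fun a' => iSup_mono fun r' => iSup_mono fun _ =>
      wBallNorm_le_ballNorm hΦ.1 a' r' (measurable_const.indicator measurableSet_ball)
  · exact iSup_le fun a' => iSup_le fun r' => iSup_le fun hr' =>
      ballNorm_indicator_ball_le_div_geninv hΦ hC1 hC (hφ.1 r hr).2.ne (hvol a a' r r' hr hr')
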